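/- Let m ≥ 1 and let 𝕋[[t_1,…,t_m]] denote the set of vertex sets, i.e. the image of the operator Vert on P(ℤ_{≥0}^m) (equivalently, the sets X ⊆ ℤ_{≥0}^m with Vert(X) = X). With the operations S ⊕ T = Vert(S ∪ T) and S ⊙ T = Vert(S + T), the set 𝕋[[t_1,…,t_m]] is a commutative idempotent semiring: ⊕ and ⊙ are commutative and associative, ⊙ distributes over ⊕, S ⊕ S = S for all S, the empty set ∅ is the neutral element for ⊕ and absorbing for ⊙ (∅ ⊙ S = ∅), and the singleton {(0,…,0)} is the neutral element for ⊙. -/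

import Mathlib

/-!
The Newton polygon `N(X)` is a convex upper set in `ℝ^m`, and `x` is a vertex of `X` exactly when
`x` is an extreme point of `N(X)`. Extreme points of an upper set are minimal in it, which gives one
direction. Conversely, if `x ∉ N(X \ {x})` then `N(X)` lies in the convex hull of `x`,
`N(X \ {x})` and the points strictly above `x`; the hull of the last two sets misses `x`, so `x` is
extreme. Hence `Vert X` depends only on `N(X)`. Moreover `N(Vert X) = N(X)`: by Dickson's lemma the
finitely many minimal elements of `X` already span `N(X)`, and from a finite set the non-vertices
can be removed one at a time without changing `N`. Since `N(S ∪ T) = conv(N S ∪ N T)` and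
`N(S + T) = N S + N T`, both operations factor through Newton polygons, and the semiring laws
reduce to those of union and Minkowski sum.
-/

open Pointwise

noncomputable section

/-- The embedding of `ℤ_{≥0}^m` into `ℝ^m`. -/
def emb {m : ℕ} (x : Fin m → ℕ) : Fin m → ℝ := fun i => (x i : ℝ)

/-- The Newton polygon of `X ⊆ ℤ_{≥0}^m`: the convex hull (in `ℝ^m`) of
`X + ℤ_{≥0}^m`. -/
def newton {m : ℕ} (X : Set (Fin m → ℕ)) : Set (Fin m → ℝ) :=
  convexHull ℝ (emb '' (X + (Set.univ : Set (Fin m → ℕ))))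

/-- The vertex set of `X`: the elements `x ∈ X` with `x ∉ N(X \ {x})`. -/
def vert {m : ℕ} (X : Set (Fin m → ℕ)) : Set (Fin m → ℕ) :=
  {x ∈ X | emb x ∉ newton (X \ {x})}

/-- Tropical sum of supports. -/
def oplus {m : ℕ} (S T : Set (Fin m → ℕ)) : Set (Fin m → ℕ) := vert (S ∪ T)

/-- Tropical product of supports (via Minkowski sum). -/
def odot {m : ℕ} (S T : Set (Fin m → ℕ)) : Set (Fin m → ℕ) := vert (S + T)

/-- A vertex set (tropical formal power series) is a set in the image of `vert`,
equivalently a fixed point of `vert`. -/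
def IsVertexSet {m : ℕ} (S : Set (Fin m → ℕ)) : Prop := vert S = S

open Set

section Convex

variable {𝕜 E : Type*} [Field 𝕜] [LinearOrder 𝕜] [IsStrictOrderedRing 𝕜] [AddCommGroup E]
  [Module 𝕜 E]

lemma mem_extremePoints_convexHull_insert {p : E} {T : Set E} (hp : p ∉ convexHull 𝕜 T) :
    p ∈ (convexHull 𝕜 (insert p T)).extremePoints 𝕜 := by
  rcases T.eq_empty_or_nonempty with rfl | hT
  · simp
  rw [convexHull_insert hT]
  refine ⟨subset_convexJoin_left hT.convexHull rfl, fun q₁ hq₁ q₂ hq₂ hp_mem => ?_⟩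
  simp only [mem_convexJoin, mem_singleton_iff, exists_eq_left] at hq₁ hq₂
  obtain ⟨h₁, hh₁, a₁, b₁, ha₁, hb₁, hab₁, rfl⟩ := hq₁
  obtain ⟨h₂, hh₂, a₂, b₂, ha₂, hb₂, hab₂, rfl⟩ := hq₂
  obtain ⟨t₁, t₂, ht₁, ht₂, ht, hpt⟩ := hp_mem
  set β := t₁ * b₁ + t₂ * b₂
  rcases (add_nonneg (mul_nonneg ht₁.le hb₁) (mul_nonneg ht₂.le hb₂)).eq_or_lt with hβ | hβ
  · obtain rfl : b₁ = 0 := by nlinarith [mul_nonneg ht₁.le hb₁, mul_nonneg ht₂.le hb₂]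
    obtain rfl : a₁ = 1 := by linarith
    simp
  · refine absurd ?_ hp
    have hβp : β • p = (t₁ * b₁) • h₁ + (t₂ * b₂) • h₂ := by
      linear_combination (norm := module) -hpt + hab₁ • (t₁ • p) + hab₂ • (t₂ • p) + ht • p
    have := (convex_convexHull 𝕜 T) hh₁ hh₂ (div_nonneg (mul_nonneg ht₁.le hb₁) hβ.le)
      (div_nonneg (mul_nonneg ht₂.le hb₂) hβ.le) (by field_simp)
    convert this using 1
    rw [← inv_smul_smul₀ hβ.ne' p, hβp, smul_add, smul_smul, smul_smul, div_eq_inv_mul,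
      div_eq_inv_mul]

end Convex

section Ordered

variable {𝕜 E : Type*} [Field 𝕜] [LinearOrder 𝕜] [IsStrictOrderedRing 𝕜] [AddCommGroup E]
  [PartialOrder E] [IsOrderedAddMonoid E] [Module 𝕜 E] {A : Set E} {p q : E}

lemma IsUpperSet.eq_of_le_of_mem_extremePoints (hA : IsUpperSet A)
    (hp : p ∈ A.extremePoints 𝕜) (hq : q ∈ A) (hqp : q ≤ p) : q = p :=
  hp.2 hq (hA (le_add_of_nonneg_right (sub_nonneg.2 hqp)) hp.1)
    ⟨1 / 2, 1 / 2, by norm_num, by norm_num, by norm_num, by module⟩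

lemma IsUpperSet.notMem_convexHull_union_Ioi [PosSMulStrictMono 𝕜 E] (hA : IsUpperSet A)
    (hAc : Convex 𝕜 A) (hp : p ∉ A) : p ∉ convexHull 𝕜 (A ∪ Ioi p) := by
  rcases A.eq_empty_or_nonempty with rfl | hA₀
  · simp [(convex_Ioi p).convexHull_eq]
  rcases (Ioi p).eq_empty_or_nonempty with hI | hI
  · rwa [hI, union_empty, hAc.convexHull_eq]
  rw [hAc.convexHull_union (convex_Ioi p) hA₀ hI, mem_convexJoin]
  rintro ⟨a, ha, q, hq, s, t, hs, ht, hst, hpq⟩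
  rcases hs.eq_or_lt with rfl | hs
  · rw [zero_add] at hst
    rw [hst, zero_smul, zero_add, one_smul] at hpq
    exact hq.ne' hpq
  · refine hp (hA ?_ ha)
    have h : s • (p - a) = t • (q - p) := by
      linear_combination (norm := module) hst • p - hpq
    rw [← sub_nonneg, ← inv_smul_smul₀ hs.ne' (p - a), h]
    exact smul_nonneg (inv_nonneg.2 hs.le) (smul_nonneg ht (sub_nonneg.2 hq.le))

end Ordered

variable {m : ℕ}

lemma emb_le_emb {x y : Fin m → ℕ} : emb x ≤ emb y ↔ x ≤ y := by
  simp only [Pi.le_def, emb, Nat.cast_le]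

lemma emb_injective : Function.Injective (emb (m := m)) :=
  fun _ _ h => le_antisymm (emb_le_emb.1 h.le) (emb_le_emb.1 h.ge)

lemma emb_lt_emb {x y : Fin m → ℕ} : emb x < emb y ↔ x < y := by
  simp only [lt_iff_le_not_ge, emb_le_emb]

lemma image_emb_add (A B : Set (Fin m → ℕ)) : emb '' (A + B) = emb '' A + emb '' B :=
  image_add ((Nat.castAddMonoidHom ℝ).compLeft (Fin m))

lemma convexHull_range_natCast : convexHull ℝ (range ((↑) : ℕ → ℝ)) = Ici 0 := by
  refine (convexHull_min (range_subset_iff.2 fun n => mem_Ici.2 n.cast_nonneg)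
    (convex_Ici 0)).antisymm fun c (hc : 0 ≤ c) => ?_
  have hseg : c ∈ segment ℝ ((⌊c⌋₊ : ℕ) : ℝ) ((⌊c⌋₊ + 1 : ℕ) : ℝ) := by
    rw [segment_eq_Icc (by simp)]
    exact ⟨Nat.floor_le hc, by simpa using (Nat.lt_floor_add_one c).le⟩
  rw [← convexHull_pair] at hseg
  exact convexHull_mono (pair_subset (mem_range_self _) (mem_range_self _)) hseg

lemma convexHull_image_emb_univ : convexHull ℝ (emb '' (univ : Set (Fin m → ℕ))) = Ici 0 := by
  rw [image_univ, show emb = Pi.map fun _ => ((↑) : ℕ → ℝ) from rfl, range_piMap, convexHull_pi,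
    convexHull_range_natCast, pi_univ_Ici]
  rfl

lemma newton_eq_convexHull_add_Ici (X : Set (Fin m → ℕ)) :
    newton X = convexHull ℝ (emb '' X) + Ici 0 := by
  rw [newton, image_emb_add, convexHull_add, convexHull_image_emb_univ]

lemma convex_newton (X : Set (Fin m → ℕ)) : Convex ℝ (newton X) :=
  convex_convexHull ℝ _

lemma isUpperSet_newton (X : Set (Fin m → ℕ)) : IsUpperSet (newton X) := by
  rw [newton_eq_convexHull_add_Ici]
  rintro _ u hle ⟨h, hh, c, hc, rfl⟩
  refine ⟨h, hh, c + (u - (h + c)), le_add_of_le_of_nonneg hc (sub_nonneg.2 hle), ?_⟩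
  dsimp only
  rw [← add_assoc, add_sub_cancel]

lemma emb_mem_newton {X : Set (Fin m → ℕ)} {x : Fin m → ℕ} (hx : x ∈ X) : emb x ∈ newton X :=
  subset_convexHull ℝ _ ⟨x, ⟨x, hx, 0, mem_univ 0, add_zero x⟩, rfl⟩

lemma newton_subset {X : Set (Fin m → ℕ)} {C : Set (Fin m → ℝ)} (hC : Convex ℝ C)
    (hCu : IsUpperSet C) (hXC : emb '' X ⊆ C) : newton X ⊆ C := by
  rw [newton_eq_convexHull_add_Ici]
  rintro _ ⟨h, hh, c, hc, rfl⟩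
  exact hCu (le_add_of_nonneg_right hc) (convexHull_min hXC hC hh)

lemma newton_mono {X Y : Set (Fin m → ℕ)} (h : X ⊆ Y) : newton X ⊆ newton Y :=
  newton_subset (convex_newton Y) (isUpperSet_newton Y) (image_subset_iff.2 fun _ hx =>
    emb_mem_newton (h hx))

lemma newton_empty : newton (∅ : Set (Fin m → ℕ)) = ∅ := by
  simp [newton]

lemma newton_union (A B : Set (Fin m → ℕ)) :
    newton (A ∪ B) = convexHull ℝ (newton A ∪ newton B) := by
  rw [newton_eq_convexHull_add_Ici A, newton_eq_convexHull_add_Ici B, ← union_add,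
    convexHull_add, (convex_Ici 0).convexHull_eq, convexHull_convexHull_union_left,
    convexHull_convexHull_union_right, newton_eq_convexHull_add_Ici, image_union]

lemma newton_add (A B : Set (Fin m → ℕ)) : newton (A + B) = newton A + newton B := by
  have hIci : Ici (0 : Fin m → ℝ) + Ici 0 = Ici 0 :=
    (Ici_add_Ici_subset 0 0).trans_eq (by rw [add_zero]) |>.antisymm
      (subset_add_left _ self_mem_Ici)
  rw [newton_eq_convexHull_add_Ici, newton_eq_convexHull_add_Ici, newton_eq_convexHull_add_Ici,
    image_emb_add, convexHull_add, add_add_add_comm, hIci]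

lemma newton_union_congr {A A' B B' : Set (Fin m → ℕ)} (hA : newton A = newton A')
    (hB : newton B = newton B') : newton (A ∪ B) = newton (A' ∪ B') := by
  rw [newton_union, hA, hB, newton_union]

lemma newton_add_congr {A A' B B' : Set (Fin m → ℕ)} (hA : newton A = newton A')
    (hB : newton B = newton B') : newton (A + B) = newton (A' + B') := by
  rw [newton_add, hA, hB, newton_add]

lemma mem_of_emb_mem_extremePoints {X : Set (Fin m → ℕ)} {x : Fin m → ℕ}
    (h : emb x ∈ (newton X).extremePoints ℝ) : x ∈ X := by
  obtain ⟨_, ⟨y, hy, a, -, rfl⟩, hyax⟩ := extremePoints_convexHull_subset h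
  have hyx : emb y = emb x := (isUpperSet_newton X).eq_of_le_of_mem_extremePoints h
    (emb_mem_newton hy) (hyax ▸ emb_le_emb.2 le_self_add)
  rwa [← emb_injective hyx]

lemma vert_eq_preimage_extremePoints (X : Set (Fin m → ℕ)) :
    vert X = emb ⁻¹' (newton X).extremePoints ℝ := by
  ext x
  refine ⟨fun ⟨hx, hxN⟩ => ?_, fun h => ⟨mem_of_emb_mem_extremePoints h, fun hxN => ?_⟩⟩
  · have hsub : emb '' (X + univ) ⊆ insert (emb x) (newton (X \ {x}) ∪ Ioi (emb x)) := by
      rintro _ ⟨_, ⟨y, hy, a, -, rfl⟩, rfl⟩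
      obtain rfl | hyx := eq_or_ne y x
      · obtain rfl | ha := eq_or_ne a 0
        · exact Or.inl (congrArg emb (add_zero y))
        · exact Or.inr (Or.inr (emb_lt_emb.2 (lt_add_of_pos_right y (pos_iff_ne_zero.2 ha))))
      · exact Or.inr (Or.inl (subset_convexHull ℝ _ ⟨_, ⟨y, ⟨hy, hyx⟩, a, mem_univ a, rfl⟩, rfl⟩))
    exact inter_extremePoints_subset_extremePoints_of_subset (convexHull_mono hsub)
      ⟨emb_mem_newton hx, mem_extremePoints_convexHull_insert
        ((isUpperSet_newton _).notMem_convexHull_union_Ioi (convex_newton _) hxN)⟩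
  · have h' :=
      inter_extremePoints_subset_extremePoints_of_subset (newton_mono sdiff_subset) ⟨hxN, h⟩
    exact (mem_of_emb_mem_extremePoints h').2 rfl

lemma vert_congr {X Y : Set (Fin m → ℕ)} (h : newton X = newton Y) : vert X = vert Y := by
  rw [vert_eq_preimage_extremePoints, vert_eq_preimage_extremePoints, h]

lemma vert_subset (X : Set (Fin m → ℕ)) : vert X ⊆ X :=
  sep_subset _ _

lemma newton_eq_newton_sdiff_singleton {X : Set (Fin m → ℕ)} {x : Fin m → ℕ}
    (hxN : emb x ∈ newton (X \ {x})) : newton X = newton (X \ {x}) := by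
  refine (newton_subset (convex_newton _) (isUpperSet_newton _) ?_).antisymm
    (newton_mono sdiff_subset)
  rintro _ ⟨y, hy, rfl⟩
  obtain rfl | hyx := eq_or_ne y x
  exacts [hxN, emb_mem_newton ⟨hy, hyx⟩]

lemma newton_vert_of_finite {X : Set (Fin m → ℕ)} (hX : X.Finite) :
    newton (vert X) = newton X := by
  induction hn : X.ncard using Nat.strong_induction_on generalizing X with
  | _ n ih =>
  by_cases hvX : vert X = X
  · rw [hvX]
  obtain ⟨x, hx, hxv⟩ := not_subset.1 fun h => hvX ((vert_subset X).antisymm h)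
  have hN := newton_eq_newton_sdiff_singleton (not_and.1 hxv hx |> not_not.1)
  rw [vert_congr hN, ih _ (hn ▸ ncard_sdiff_singleton_lt_of_mem hx hX) hX.sdiff rfl, hN]

lemma newton_vert (X : Set (Fin m → ℕ)) : newton (vert X) = newton X := by
  set M := {x | Minimal (· ∈ X) x}
  have hM : newton M = newton X := by
    refine (newton_mono fun _ hx => hx.prop).antisymm
      (newton_subset (convex_newton M) (isUpperSet_newton M) ?_)
    rintro _ ⟨x, hx, rfl⟩
    obtain ⟨y, hyx, hy⟩ := exists_minimal_le_of_wellFoundedLT _ x hx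
    exact isUpperSet_newton M (emb_le_emb.2 hyx) (emb_mem_newton hy)
  have hMfin : M.Finite :=
    WellQuasiOrderedLE.finite_of_isAntichain (setOfPred_minimal_antichain _)
  rw [← vert_congr hM, newton_vert_of_finite hMfin, hM]

lemma vert_vert (X : Set (Fin m → ℕ)) : vert (vert X) = vert X :=
  vert_congr (newton_vert X)

lemma vert_empty : vert (∅ : Set (Fin m → ℕ)) = ∅ :=
  subset_empty_iff.1 (vert_subset ∅)

lemma vert_singleton (x : Fin m → ℕ) : vert {x} = {x} := by
  refine (vert_subset _).antisymm (singleton_subset_iff.2 ⟨rfl, ?_⟩)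
  rw [sdiff_self, newton_empty]
  exact notMem_empty _

theorem vertexSets_comm_idem_semiring_general (m : ℕ) :
    -- closure of the operations
    (∀ S T : Set (Fin m → ℕ), IsVertexSet S → IsVertexSet T → IsVertexSet (oplus S T)) ∧
    (∀ S T : Set (Fin m → ℕ), IsVertexSet S → IsVertexSet T → IsVertexSet (odot S T)) ∧
    -- `⊕` is commutative and associative
    (∀ S T : Set (Fin m → ℕ), IsVertexSet S → IsVertexSet T → oplus S T = oplus T S) ∧
    (∀ S T U : Set (Fin m → ℕ), IsVertexSet S → IsVertexSet T → IsVertexSet U →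
      oplus (oplus S T) U = oplus S (oplus T U)) ∧
    -- `⊙` is commutative and associative
    (∀ S T : Set (Fin m → ℕ), IsVertexSet S → IsVertexSet T → odot S T = odot T S) ∧
    (∀ S T U : Set (Fin m → ℕ), IsVertexSet S → IsVertexSet T → IsVertexSet U →
      odot (odot S T) U = odot S (odot T U)) ∧
    -- `⊙` distributes over `⊕`
    (∀ S T U : Set (Fin m → ℕ), IsVertexSet S → IsVertexSet T → IsVertexSet U →
      odot S (oplus T U) = oplus (odot S T) (odot S U)) ∧
    -- `⊕` is idempotent
    (∀ S : Set (Fin m → ℕ), IsVertexSet S → oplus S S = S) ∧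
    -- `∅` is neutral for `⊕`
    (IsVertexSet (∅ : Set (Fin m → ℕ)) ∧
      ∀ S : Set (Fin m → ℕ), IsVertexSet S → oplus ∅ S = S) ∧
    -- `∅` is absorbing for `⊙`
    (∀ S : Set (Fin m → ℕ), IsVertexSet S → odot ∅ S = ∅) ∧
    -- `{(0,…,0)}` is neutral for `⊙`
    (IsVertexSet ({0} : Set (Fin m → ℕ)) ∧
      ∀ S : Set (Fin m → ℕ), IsVertexSet S → odot {0} S = S) := by
  unfold oplus odot
  refine ⟨fun S T _ _ => vert_vert _, fun S T _ _ => vert_vert _,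
    fun S T _ _ => by rw [union_comm], fun S T U _ _ _ => vert_congr ?_,
    fun S T _ _ => by rw [add_comm], fun S T U _ _ _ => vert_congr ?_,
    fun S T U _ _ _ => vert_congr ?_, fun S hS => (union_self S).symm ▸ hS,
    ⟨vert_empty, fun S hS => (empty_union S).symm ▸ hS⟩,
    fun S _ => by rw [empty_add, vert_empty],
    ⟨vert_singleton 0, fun S hS => by rw [singleton_zero, zero_add]; exact hS⟩⟩
  · rw [newton_union_congr (newton_vert _) rfl, newton_union_congr rfl (newton_vert _), union_assoc]
  · rw [newton_add_congr (newton_vert _) rfl, newton_add_congr rfl (newton_vert _), add_assoc]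
  · rw [newton_add_congr rfl (newton_vert _), newton_union_congr (newton_vert _) (newton_vert _),
      add_union]

/-- The set of vertex sets `𝕋[[t_1,…,t_m]]`, with `⊕` and `⊙`, is a commutative
idempotent semiring. -/
theorem vertexSets_comm_idem_semiring (m : ℕ) (hm : 1 ≤ m) :
    -- closure of the operations
    (∀ S T : Set (Fin m → ℕ), IsVertexSet S → IsVertexSet T → IsVertexSet (oplus S T)) ∧
    (∀ S T : Set (Fin m → ℕ), IsVertexSet S → IsVertexSet T → IsVertexSet (odot S T)) ∧
    -- `⊕` is commutative and associative
    (∀ S T : Set (Fin m → ℕ), IsVertexSet S → IsVertexSet T → oplus S T = oplus T S) ∧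
    (∀ S T U : Set (Fin m → ℕ), IsVertexSet S → IsVertexSet T → IsVertexSet U →
      oplus (oplus S T) U = oplus S (oplus T U)) ∧
    -- `⊙` is commutative and associative
    (∀ S T : Set (Fin m → ℕ), IsVertexSet S → IsVertexSet T → odot S T = odot T S) ∧
    (∀ S T U : Set (Fin m → ℕ), IsVertexSet S → IsVertexSet T → IsVertexSet U →
      odot (odot S T) U = odot S (odot T U)) ∧
    -- `⊙` distributes over `⊕`
    (∀ S T U : Set (Fin m → ℕ), IsVertexSet S → IsVertexSet T → IsVertexSet U →
      odot S (oplus T U) = oplus (odot S T) (odot S U)) ∧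
    -- `⊕` is idempotent
    (∀ S : Set (Fin m → ℕ), IsVertexSet S → oplus S S = S) ∧
    -- `∅` is neutral for `⊕`
    (IsVertexSet (∅ : Set (Fin m → ℕ)) ∧
      ∀ S : Set (Fin m → ℕ), IsVertexSet S → oplus ∅ S = S) ∧
    -- `∅` is absorbing for `⊙`
    (∀ S : Set (Fin m → ℕ), IsVertexSet S → odot ∅ S = ∅) ∧
    -- `{(0,…,0)}` is neutral for `⊙`
    (IsVertexSet ({0} : Set (Fin m → ℕ)) ∧
      ∀ S : Set (Fin m → ℕ), IsVertexSet S → odot {0} S = S) :=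
  vertexSets_comm_idem_semiring_general m
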